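/- Let k ≥ 1 be an integer and N > 1 a real number, and define for t with t² ≥ exp^{(k)}(2N): Φ(t) = t²·(ln t²)²·(ln^{(2)} t²)²⋯(ln^{(k−1)} t²)²·(ln^{(k)} t²)^{2N}. Then there exist constants c, C, t₀ > 0 depending only on k and N such that for all t ≥ t₀, writing s = Φ(t), one has c·√s/((ln s)·(ln^{(2)} s)⋯(ln^{(k−1)} s)·(ln^{(k)} s)^{N}) ≤ t ≤ C·√s/((ln s)·(ln^{(2)} s)⋯(ln^{(k−1)} s)·(ln^{(k)} s)^{N}). -/

import Mathlib

/-- `Φ(t) = t²·(ln t²)²·(ln^[2] t²)²⋯(ln^[k-1] t²)²·(ln^[k] t²)^(2N)`. -/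
noncomputable def PhiKN (k : ℕ) (N : ℝ) (t : ℝ) : ℝ :=
  t ^ 2 * (∏ i ∈ Finset.Ico 1 k, (Real.log^[i] (t ^ 2)) ^ 2) *
    (Real.log^[k] (t ^ 2)) ^ (2 * N)

/-!
Put `x = t²` and `W(x) = (ln x)(ln^{(2)} x)⋯(ln^{(k-1)} x)(ln^{(k)} x)^N`, so that
`Φ(t) = x·W(x)²` and `√Φ(t) = t·W(x)`. Since `W(x)` grows slower than any power of `x`,
`x ≤ s = Φ(t) ≤ x²` for large `t`, and on `[x, x²]` every iterated logarithm `ln^{(i)}`, `i ≥ 1`,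
varies by a factor at most `2`. Hence `W(x) ≤ W(s) ≤ 2^{k-1+N}·W(x)`, and
`t = (√s / W(s))·(W(s) / W(x))`.
-/

open Real Filter Finset

theorem tendsto_iterate_log_atTop (i : ℕ) : Tendsto log^[i] atTop atTop := by
  induction i with
  | zero => exact tendsto_id
  | succ i ih => rw [Function.iterate_succ']; exact tendsto_log_atTop.comp ih

theorem exists_monotoneOn_iterate_log (i : ℕ) : ∃ a, MonotoneOn log^[i] (Set.Ici a) := by
  induction i with
  | zero => exact ⟨0, monotone_id.monotoneOn _⟩
  | succ i ih =>
    obtain ⟨a, ha⟩ := ih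
    refine ⟨exp a, ?_⟩
    rw [Function.iterate_succ]
    refine ha.comp (strictMonoOn_log.monotoneOn.mono fun x hx => ?_) fun x hx => ?_
    · exact (exp_pos a).trans_le hx
    · exact (le_log_iff_exp_le ((exp_pos a).trans_le hx)).2 hx

theorem eventually_iterate_log_le_log {i : ℕ} (hi : 1 ≤ i) :
    ∀ᶠ x in atTop, log^[i] x ≤ log x := by
  induction i, hi using Nat.le_induction with
  | base => exact Eventually.of_forall fun x => le_rfl
  | succ i _ ih =>
    filter_upwards [ih, (tendsto_iterate_log_atTop i).eventually_ge_atTop 0] with x hx hpos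
    rw [Function.iterate_succ_apply']
    exact (log_le_self hpos).trans hx

theorem eventually_iterate_log_sq_le {i : ℕ} (hi : 1 ≤ i) :
    ∀ᶠ x in atTop, log^[i] (x ^ 2) ≤ 2 * log^[i] x := by
  induction i, hi using Nat.le_induction with
  | base => exact Eventually.of_forall fun x => by simp [log_pow]
  | succ i _ ih =>
    filter_upwards [ih, (tendsto_iterate_log_atTop i).eventually_gt_atTop 0,
      ((tendsto_iterate_log_atTop i).comp (tendsto_pow_atTop two_ne_zero)).eventually_gt_atTop 0,
      (tendsto_iterate_log_atTop (i + 1)).eventually_ge_atTop 1] with x hx hpos hsqpos hone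
    simp only [Function.iterate_succ_apply'] at hone ⊢
    have hlog2 := log_two_lt_d9
    calc log (log^[i] (x ^ 2)) ≤ log (2 * log^[i] x) := log_le_log hsqpos hx
      _ = log 2 + log (log^[i] x) := log_mul two_ne_zero hpos.ne'
      _ ≤ 2 * log (log^[i] x) := by linarith

theorem eventually_iterate_log_mem_Icc {i : ℕ} (hi : 1 ≤ i) :
    ∀ᶠ x in atTop, ∀ y ∈ Set.Icc x (x ^ 2), log^[i] y ∈ Set.Icc (log^[i] x) (2 * log^[i] x) := by
  obtain ⟨a, ha⟩ := exists_monotoneOn_iterate_log i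
  filter_upwards [eventually_ge_atTop a, eventually_iterate_log_sq_le hi]
    with x hxa hsq y ⟨hxy, hyx⟩
  have hy : y ∈ Set.Ici a := hxa.trans hxy
  have hx2 : x ^ 2 ∈ Set.Ici a := hy.out.trans hyx
  exact ⟨ha hxa hy hxy, (ha hy hx2 hyx).trans hsq⟩

noncomputable def iteratedLogProduct (k : ℕ) (N x : ℝ) : ℝ :=
  (∏ i ∈ Ico 1 k, log^[i] x) * (log^[k] x) ^ N

theorem PhiKN_eq (k : ℕ) (N : ℝ) {t : ℝ} (ht : 0 ≤ log^[k] (t ^ 2)) :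
    PhiKN k N t = t ^ 2 * iteratedLogProduct k N (t ^ 2) ^ 2 := by
  have hpow : (log^[k] (t ^ 2) ^ N) ^ 2 = log^[k] (t ^ 2) ^ (2 * N) := by
    rw [← rpow_natCast, ← rpow_mul ht, Nat.cast_ofNat, mul_comm]
  rw [PhiKN, iteratedLogProduct, mul_pow, prod_pow, hpow, mul_assoc]

theorem eventually_one_le_iteratedLogProduct (k : ℕ) {N : ℝ} (hN : 0 ≤ N) :
    ∀ᶠ x in atTop, 1 ≤ iteratedLogProduct k N x := by
  filter_upwards [(eventually_all_finset (range (k + 1))).2 fun i _ =>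
    (tendsto_iterate_log_atTop i).eventually_ge_atTop 1] with x hx
  exact one_le_mul_of_one_le_of_one_le
    (one_le_prod fun i hi => hx i (by simp at hi ⊢; omega))
    (one_le_rpow (hx k (by simp)) hN)

theorem eventually_iteratedLogProduct_sq_le {k : ℕ} (hk : 1 ≤ k) {N : ℝ} (hN : 0 ≤ N) :
    ∀ᶠ x in atTop, iteratedLogProduct k N x ^ 2 ≤ x := by
  have hlog : ∀ᶠ x in atTop, ∀ i ∈ Ico 1 (k + 1), 0 ≤ log^[i] x ∧ log^[i] x ≤ log x :=
    (eventually_all_finset _).2 fun i hi =>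
      ((tendsto_iterate_log_atTop i).eventually_ge_atTop 0).and
        (eventually_iterate_log_le_log (mem_Ico.1 hi).1)
  filter_upwards [hlog,
    (isLittleO_log_rpow_rpow_atTop ((k - 1 : ℕ) + N) one_half_pos).eventuallyLE,
    tendsto_log_atTop.eventually_gt_atTop 0, eventually_ge_atTop 0] with x hx hsmall hlog0 hx0
  rw [norm_of_nonneg (rpow_nonneg hlog0.le _), norm_of_nonneg (rpow_nonneg hx0 _),
    rpow_add hlog0, rpow_natCast] at hsmall
  have hprod : ∏ i ∈ Ico 1 k, log^[i] x ≤ log x ^ (k - 1) :=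
    calc ∏ i ∈ Ico 1 k, log^[i] x ≤ ∏ i ∈ Ico 1 k, log x :=
          prod_le_prod (fun i hi => (hx i (by simp at hi ⊢; omega)).1)
            (fun i hi => (hx i (by simp at hi ⊢; omega)).2)
      _ = log x ^ (k - 1) := by rw [prod_const, Nat.card_Ico]
  have hlast := hx k (by simp; omega)
  have hW : iteratedLogProduct k N x ≤ x ^ (1 / 2 : ℝ) :=
    calc iteratedLogProduct k N x ≤ log x ^ (k - 1) * log x ^ N :=
          mul_le_mul hprod (rpow_le_rpow hlast.1 hlast.2 hN) (rpow_nonneg hlast.1 _)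
            (pow_nonneg hlog0.le _)
      _ ≤ x ^ (1 / 2 : ℝ) := hsmall
  have hW0 : 0 ≤ iteratedLogProduct k N x :=
    mul_nonneg (prod_nonneg fun i hi => (hx i (by simp at hi ⊢; omega)).1)
      (rpow_nonneg hlast.1 _)
  calc iteratedLogProduct k N x ^ 2 ≤ (x ^ (1 / 2 : ℝ)) ^ 2 := pow_le_pow_left₀ hW0 hW 2
    _ = x := by rw [← rpow_natCast, ← rpow_mul hx0]; norm_num

theorem eventually_iteratedLogProduct_mem_Icc {k : ℕ} (hk : 1 ≤ k) {N : ℝ} (hN : 0 ≤ N) :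
    ∀ᶠ x in atTop, ∀ y ∈ Set.Icc x (x ^ 2), iteratedLogProduct k N y ∈
      Set.Icc (iteratedLogProduct k N x) (2 ^ (k - 1) * 2 ^ N * iteratedLogProduct k N x) := by
  filter_upwards [(eventually_all_finset (Ico 1 (k + 1))).2 fun i hi =>
    ((tendsto_iterate_log_atTop i).eventually_ge_atTop 0).and
      (eventually_iterate_log_mem_Icc (mem_Ico.1 hi).1)] with x hx y hy
  have hxi : ∀ i ∈ Ico 1 k, 0 ≤ log^[i] x ∧ log^[i] y ∈ Set.Icc (log^[i] x) (2 * log^[i] x) :=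
    fun i hi => (hx i (by simp at hi ⊢; omega)).imp_right fun h => h y hy
  obtain ⟨hxk, hyk⟩ := (hx k (by simp; omega)).imp_right fun h => h y hy
  constructor
  · exact mul_le_mul (prod_le_prod (fun i hi => (hxi i hi).1) fun i hi => (hxi i hi).2.1)
      (rpow_le_rpow hxk hyk.1 hN) (rpow_nonneg hxk _)
      (prod_nonneg fun i hi => (hxi i hi).1.trans (hxi i hi).2.1)
  · calc iteratedLogProduct k N y
        ≤ (∏ i ∈ Ico 1 k, 2 * log^[i] x) * (2 * log^[k] x) ^ N :=
          mul_le_mul (prod_le_prod (fun i hi => (hxi i hi).1.trans (hxi i hi).2.1)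
            fun i hi => (hxi i hi).2.2) (rpow_le_rpow (hxk.trans hyk.1) hyk.2 hN)
            (rpow_nonneg (hxk.trans hyk.1) _) (prod_nonneg fun i hi => by linarith [(hxi i hi).1])
      _ = 2 ^ (k - 1) * 2 ^ N * iteratedLogProduct k N x := by
          rw [prod_mul_distrib, prod_const, Nat.card_Ico, mul_rpow zero_le_two hxk,
            iteratedLogProduct]
          ring

theorem eventually_PhiKN_mem_Icc {k : ℕ} (hk : 1 ≤ k) {N : ℝ} (hN : 0 ≤ N) :
    ∀ᶠ t in atTop, PhiKN k N t ∈ Set.Icc (t ^ 2) ((t ^ 2) ^ 2) := by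
  filter_upwards [(tendsto_pow_atTop two_ne_zero).eventually <|
    ((tendsto_iterate_log_atTop k).eventually_ge_atTop 0).and <|
      (eventually_one_le_iteratedLogProduct k hN).and (eventually_iteratedLogProduct_sq_le hk hN)]
    with t ⟨hlogk, hW1, hWsq⟩
  rw [PhiKN_eq k N hlogk]
  exact ⟨le_mul_of_one_le_right (sq_nonneg t) (one_le_pow₀ hW1),
    (mul_le_mul_of_nonneg_left hWsq (sq_nonneg t)).trans_eq (sq _).symm⟩

theorem eventually_sqrt_PhiKN (k : ℕ) {N : ℝ} (hN : 0 ≤ N) :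
    ∀ᶠ t in atTop, √(PhiKN k N t) = t * iteratedLogProduct k N (t ^ 2) := by
  filter_upwards [eventually_ge_atTop 0, (tendsto_pow_atTop two_ne_zero).eventually <|
    ((tendsto_iterate_log_atTop k).eventually_ge_atTop 0).and
      (eventually_one_le_iteratedLogProduct k hN)] with t ht ⟨hlogk, hW1⟩
  rw [PhiKN_eq k N hlogk, ← mul_pow, sqrt_sq (mul_nonneg ht (zero_le_one.trans hW1))]

/-- For `k ≥ 1`, `N > 1` there exist `c, C, t₀ > 0` depending only on `k, N`
such that for all `t ≥ t₀`, writing `s = Φ(t)`,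
`c·√s/((ln s)·(ln^[2] s)⋯(ln^[k-1] s)·(ln^[k] s)^N) ≤ t ≤ C·√s/((ln s)⋯(ln^[k] s)^N)`. -/
theorem Phi_inverse_comparable
    (k : ℕ) (hk : 1 ≤ k) (N : ℝ) (hN : 1 < N) :
    ∃ c : ℝ, 0 < c ∧ ∃ C : ℝ, 0 < C ∧ ∃ t₀ : ℝ, 0 < t₀ ∧
      ∀ t, t₀ ≤ t →
        c * (Real.sqrt (PhiKN k N t) /
            ((∏ i ∈ Finset.Ico 1 k, Real.log^[i] (PhiKN k N t)) *
              (Real.log^[k] (PhiKN k N t)) ^ N)) ≤ t ∧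
        t ≤ C * (Real.sqrt (PhiKN k N t) /
            ((∏ i ∈ Finset.Ico 1 k, Real.log^[i] (PhiKN k N t)) *
              (Real.log^[k] (PhiKN k N t)) ^ N)) := by
  have hN0 : 0 ≤ N := by linarith
  have key : ∀ᶠ t in atTop, 0 < t ∧ 1 ≤ iteratedLogProduct k N (t ^ 2) ∧
      √(PhiKN k N t) = t * iteratedLogProduct k N (t ^ 2) ∧
      iteratedLogProduct k N (PhiKN k N t) ∈ Set.Icc (iteratedLogProduct k N (t ^ 2))
        (2 ^ (k - 1) * 2 ^ N * iteratedLogProduct k N (t ^ 2)) := by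
    filter_upwards [eventually_gt_atTop 0, eventually_sqrt_PhiKN k hN0,
      eventually_PhiKN_mem_Icc hk hN0, (tendsto_pow_atTop two_ne_zero).eventually <|
        (eventually_one_le_iteratedLogProduct k hN0).and
          (eventually_iteratedLogProduct_mem_Icc hk hN0)] with t ht hsqrt hs ⟨hW1, hcomp⟩
    exact ⟨ht, hW1, hsqrt, hcomp _ hs⟩
  obtain ⟨t₀, ht₀⟩ := eventually_atTop.1 key
  refine ⟨1, one_pos, 2 ^ (k - 1) * 2 ^ N, by positivity, max t₀ 1, by positivity,
    fun t ht => ?_⟩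
  obtain ⟨ht0, hW1, hsqrt, hlow, hup⟩ := ht₀ t (le_of_max_le_left ht)
  have hpos : 0 < iteratedLogProduct k N (PhiKN k N t) := by linarith
  change 1 * (√(PhiKN k N t) / iteratedLogProduct k N (PhiKN k N t)) ≤ t ∧
    t ≤ _ * (√(PhiKN k N t) / iteratedLogProduct k N (PhiKN k N t))
  rw [hsqrt, one_mul, mul_div_assoc', div_le_iff₀ hpos, le_div_iff₀ hpos]
  exact ⟨mul_le_mul_of_nonneg_left hlow ht0.le,
    (mul_le_mul_of_nonneg_left hup ht0.le).trans_eq (by ring)⟩
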